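/- (Verification of Theorem 3.) Let φ : [0,T] → ℝ be differentiable with e^{φ(t)²/2} N(φ(t)) = e^{r(T−t)}/2 for all t ∈ [0,T], set Σ(t,u) := φ(t)² − φ(u)² for 0 ≤ t ≤ u ≤ T, and define b(t) := K/(2·N(φ(t))). Then for every t ∈ [0,T): K − b(t) = V^e(t, b(t)) + r·K ∫_t^T e^{−r(u−t)} · N( (log(b(u)/b(t)) − r(u−t) + Σ(t,u)/2) / √(Σ(t,u)) ) du, where V^e(t,x) = K·e^{−r(T−t)}·N( (log(K/x) − r(T−t) + Σ(t,T)/2) / √(Σ(t,T)) ) − x·N( (log(K/x) − r(T−t) − Σ(t,T)/2) / √(Σ(t,T)) ) for x > 0. -/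

import Mathlib

/-!
Write `g x = exp (x² / 2) * N x`. Its derivative `exp (x² / 2) * (x N(x) + N'(x))` is positive
because `x N(x) + N'(x) = ∫_{y ≤ x} (x - y) N'(y) dy`, so `g` is strictly increasing. Since
`g (φ T) = 1/2 = g 0` and `g (φ t) = exp (r (T - t)) / 2 > 1/2` for `t < T`, we get `φ T = 0` and
`φ t > 0`. The defining equation of `φ` says `b u = K exp (φ u² / 2 - r (T - u))`, which makes the
argument of `N` in the integral vanish identically, so the integrand is `exp (-r (u - t)) / 2`;
likewise `V^e(t, b t) = K exp (-r (T - t)) / 2 - b t * N (-φ t)`. With `b t * N (φ t) = K / 2` and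
`N x + N (-x) = 1` the identity is then elementary algebra.
-/

open MeasureTheory Real Set Filter

/-- Standard normal cdf `N(x)`. -/
noncomputable def stdCdf (x : ℝ) : ℝ := ∫ y in Set.Iic x, Real.exp (-y ^ 2 / 2) / Real.sqrt (2 * Real.pi)

open ProbabilityTheory

noncomputable def stdPdf (x : ℝ) : ℝ := Real.exp (-x ^ 2 / 2) / Real.sqrt (2 * Real.pi)

lemma stdCdf_eq_setIntegral_stdPdf (x : ℝ) : stdCdf x = ∫ y in Iic x, stdPdf y := rfl

lemma stdPdf_eq_gaussianPDFReal : stdPdf = gaussianPDFReal 0 1 := by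
  ext x
  simp [stdPdf, gaussianPDFReal, div_eq_inv_mul]

lemma stdPdf_pos (x : ℝ) : 0 < stdPdf x := by
  unfold stdPdf; positivity

lemma stdPdf_neg (x : ℝ) : stdPdf (-x) = stdPdf x := by
  simp [stdPdf]

lemma integrable_stdPdf : Integrable stdPdf := by
  rw [stdPdf_eq_gaussianPDFReal]; exact integrable_gaussianPDFReal 0 1

lemma integral_stdPdf : ∫ x, stdPdf x = 1 := by
  rw [stdPdf_eq_gaussianPDFReal]; exact integral_gaussianPDFReal_eq_one 0 one_ne_zero

lemma continuous_stdPdf : Continuous stdPdf := by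
  unfold stdPdf; fun_prop

lemma hasDerivAt_stdPdf (x : ℝ) : HasDerivAt stdPdf (-x * stdPdf x) x := by
  have h : HasDerivAt (fun y : ℝ => -y ^ 2 / 2) (-x) x :=
    ((hasDerivAt_pow 2 x).neg.div_const 2).congr_deriv (by push_cast; ring)
  exact (h.exp.div_const (Real.sqrt (2 * Real.pi))).congr_deriv (by simp only [stdPdf]; ring)

lemma tendsto_stdPdf_atBot : Tendsto stdPdf atBot (nhds 0) := by
  unfold stdPdf
  have h : Tendsto (fun y : ℝ => -y ^ 2 / 2) atBot atBot := by
    refine (tendsto_neg_atTop_atBot.comp ?_).atBot_div_const two_pos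
    exact ((tendsto_pow_atTop (α := ℝ) two_ne_zero).comp tendsto_neg_atBot_atTop).congr
      fun y => by simp
  have := (Real.tendsto_exp_atBot.comp h).div_const (Real.sqrt (2 * Real.pi))
  rwa [zero_div] at this

lemma integrable_mul_stdPdf : Integrable fun y => y * stdPdf y := by
  convert (integrable_mul_exp_neg_mul_sq (b := 1 / 2) one_half_pos).div_const
    (Real.sqrt (2 * Real.pi)) using 2 with y
  simp only [stdPdf]; ring_nf

lemma setIntegral_Iic_neg_mul_stdPdf (x : ℝ) : ∫ y in Iic x, -y * stdPdf y = stdPdf x := by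
  simpa using integral_Iic_of_hasDerivAt_of_tendsto continuous_stdPdf.continuousWithinAt
    (fun y _ => hasDerivAt_stdPdf y) (by simpa using integrable_mul_stdPdf.neg.integrableOn)
    tendsto_stdPdf_atBot

lemma stdCdf_add_stdCdf_neg (x : ℝ) : stdCdf x + stdCdf (-x) = 1 := by
  have h : stdCdf (-x) = ∫ y in Ioi x, stdPdf y := by
    rw [stdCdf_eq_setIntegral_stdPdf, ← integral_comp_neg_Ioi]
    simp_rw [stdPdf_neg]
  rw [h, stdCdf_eq_setIntegral_stdPdf, intervalIntegral.integral_Iic_add_Ioi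
    integrable_stdPdf.integrableOn integrable_stdPdf.integrableOn, integral_stdPdf]

lemma stdCdf_zero : stdCdf 0 = 1 / 2 := by
  linarith [neg_zero (G := ℝ) ▸ stdCdf_add_stdCdf_neg 0]

lemma stdCdf_pos (x : ℝ) : 0 < stdCdf x := by
  rw [stdCdf_eq_setIntegral_stdPdf, setIntegral_pos_iff_support_of_nonneg_ae
    (ae_of_all _ fun y => (stdPdf_pos y).le) integrable_stdPdf.integrableOn]
  simp [Function.support_eq_univ fun y => (stdPdf_pos y).ne']

lemma hasDerivAt_stdCdf (x : ℝ) : HasDerivAt stdCdf (stdPdf x) x := by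
  have h : ∀ u, stdCdf u = stdCdf 0 + ∫ y in (0 : ℝ)..u, stdPdf y := fun u => by
    rw [← intervalIntegral.integral_Iic_sub_Iic integrable_stdPdf.integrableOn
      integrable_stdPdf.integrableOn, stdCdf_eq_setIntegral_stdPdf, stdCdf_eq_setIntegral_stdPdf]
    ring
  rw [funext h]
  exact (intervalIntegral.integral_hasDerivAt_right integrable_stdPdf.intervalIntegrable
    (continuous_stdPdf.stronglyMeasurableAtFilter _ _) continuous_stdPdf.continuousAt).const_add _

lemma mul_stdCdf_add_stdPdf_eq_setIntegral (x : ℝ) :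
    x * stdCdf x + stdPdf x = ∫ y in Iic x, (x - y) * stdPdf y := by
  have hx : IntegrableOn (fun y => x * stdPdf y) (Iic x) :=
    (integrable_stdPdf.const_mul x).integrableOn
  have hy : IntegrableOn (fun y => -y * stdPdf y) (Iic x) := by
    simpa using integrable_mul_stdPdf.neg.integrableOn
  simp_rw [sub_eq_add_neg x, add_mul, integral_add hx hy, integral_const_mul,
    setIntegral_Iic_neg_mul_stdPdf, stdCdf_eq_setIntegral_stdPdf]

lemma mul_stdCdf_add_stdPdf_pos (x : ℝ) : 0 < x * stdCdf x + stdPdf x := by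
  have hint : Integrable fun y => (x - y) * stdPdf y := by
    simp_rw [sub_mul]
    exact (integrable_stdPdf.const_mul x).sub integrable_mul_stdPdf
  rw [mul_stdCdf_add_stdPdf_eq_setIntegral, setIntegral_pos_iff_support_of_nonneg_ae
    ((ae_restrict_mem measurableSet_Iic).mono fun y (hy : y ≤ x) =>
      mul_nonneg (sub_nonneg.2 hy) (stdPdf_pos y).le) hint.integrableOn]
  refine lt_of_lt_of_le ?_ (measure_mono (s := Iio x) fun y (hy : y < x) =>
    ⟨mul_ne_zero (sub_ne_zero.2 hy.ne') (stdPdf_pos y).ne', hy.le⟩)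
  simp

lemma strictMono_exp_sq_mul_stdCdf : StrictMono fun x => exp (x ^ 2 / 2) * stdCdf x := by
  refine strictMono_of_hasDerivAt_pos (fun x => ?_) fun x =>
    mul_pos (exp_pos (x ^ 2 / 2)) (mul_stdCdf_add_stdPdf_pos x)
  have h : HasDerivAt (fun y : ℝ => y ^ 2 / 2) x x :=
    ((hasDerivAt_pow 2 x).div_const 2).congr_deriv (by push_cast; ring)
  exact (h.exp.mul (hasDerivAt_stdCdf x)).congr_deriv (by ring)

lemma exp_sq_mul_stdCdf_zero : exp ((0 : ℝ) ^ 2 / 2) * stdCdf 0 = 1 / 2 := by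
  simp [stdCdf_zero]

lemma eq_zero_of_exp_sq_mul_stdCdf_eq_half {x : ℝ} (h : exp (x ^ 2 / 2) * stdCdf x = 1 / 2) :
    x = 0 :=
  strictMono_exp_sq_mul_stdCdf.injective (h.trans exp_sq_mul_stdCdf_zero.symm)

lemma pos_of_half_lt_exp_sq_mul_stdCdf {x : ℝ} (h : 1 / 2 < exp (x ^ 2 / 2) * stdCdf x) :
    0 < x :=
  strictMono_exp_sq_mul_stdCdf.lt_iff_lt.1 (exp_sq_mul_stdCdf_zero.trans_lt h)

lemma div_two_mul_stdCdf_eq {x c : ℝ} (h : exp (x ^ 2 / 2) * stdCdf x = exp c / 2) (K : ℝ) :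
    K / (2 * stdCdf x) = K * exp (x ^ 2 / 2 - c) := by
  have := stdCdf_pos x
  rw [exp_sub, show exp c = 2 * (exp (x ^ 2 / 2) * stdCdf x) by linarith]
  field_simp

lemma integral_exp_neg_mul_sub {r : ℝ} (hr : r ≠ 0) (t T : ℝ) :
    ∫ u in t..T, exp (-r * (u - t)) = (1 - exp (-r * (T - t))) / r := by
  have hF : ∀ u ∈ uIcc t T,
      HasDerivAt (fun u => -exp (-r * (u - t)) / r) (exp (-r * (u - t))) u :=
    fun u _ => ((((hasDerivAt_id u).sub_const t).const_mul (-r)).exp.neg.div_const r).congr_deriv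
      (by simp only [id]; field_simp)
  have hint : Continuous fun u => exp (-r * (u - t)) := by fun_prop
  rw [intervalIntegral.integral_eq_sub_of_hasDerivAt hF (hint.intervalIntegrable _ _)]
  simp only [sub_self, mul_zero, exp_zero]
  ring

lemma boundary_log_ratio_sub_add_eq_zero {K : ℝ} (hK : K ≠ 0) (r T t u x y : ℝ) :
    log (K * exp (y ^ 2 / 2 - r * (T - u)) / (K * exp (x ^ 2 / 2 - r * (T - t))))
      - r * (u - t) + (x ^ 2 - y ^ 2) / 2 = 0 := by
  rw [mul_div_mul_left _ _ hK, ← exp_sub, log_exp]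
  ring

lemma put_value_at_boundary {K s x : ℝ} (hK : K ≠ 0) (hs : 0 < s) (r τ : ℝ)
    (hx : x = K * exp (s ^ 2 / 2 - r * τ)) :
    K * exp (-r * τ) * stdCdf ((log (K / x) - r * τ + s ^ 2 / 2) / √(s ^ 2))
      - x * stdCdf ((log (K / x) - r * τ - s ^ 2 / 2) / √(s ^ 2))
      = K * exp (-r * τ) / 2 - x * stdCdf (-s) := by
  have hlog : log (K / x) = r * τ - s ^ 2 / 2 := by
    rw [hx, div_mul_cancel_left₀ hK, ← exp_neg, log_exp]
    ring
  rw [hlog, sqrt_sq hs.le, show r * τ - s ^ 2 / 2 - r * τ + s ^ 2 / 2 = 0 by ring,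
    show r * τ - s ^ 2 / 2 - r * τ - s ^ 2 / 2 = -s * s by ring,
    mul_div_cancel_right₀ _ hs.ne', zero_div, stdCdf_zero]
  ring

theorem boundary_solves_integral_equation_vol_general (r T K : ℝ)
    (hr : 0 < r) (hK : 0 < K)
    (φ : ℝ → ℝ)
    (heq : ∀ t ∈ Set.Icc 0 T,
      Real.exp ((φ t) ^ 2 / 2) * stdCdf (φ t) = Real.exp (r * (T - t)) / 2)
    -- `Sig(t,u) = φ(t)² − φ(u)²` and `b(t) = K/(2·N(φ(t)))`
    (Sig : ℝ → ℝ → ℝ) (hSig : ∀ t u, Sig t u = (φ t) ^ 2 - (φ u) ^ 2)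
    (b : ℝ → ℝ) (hb : ∀ t, b t = K / (2 * stdCdf (φ t)))
    (Ve : ℝ → ℝ → ℝ)
    (hVe : ∀ t x, Ve t x
      = K * Real.exp (-r * (T - t)) *
          stdCdf ((Real.log (K / x) - r * (T - t) + Sig t T / 2) / Real.sqrt (Sig t T))
        - x * stdCdf ((Real.log (K / x) - r * (T - t) - Sig t T / 2) / Real.sqrt (Sig t T))) :
    ∀ t, 0 ≤ t → t < T →
      K - b t
        = Ve t (b t)
          + r * K * ∫ u in t..T, Real.exp (-r * (u - t)) *
              stdCdf ((Real.log (b u / b t) - r * (u - t) + Sig t u / 2) / Real.sqrt (Sig t u)) := by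
  intro t ht htT
  have hmem : ∀ u ∈ Icc t T, u ∈ Icc 0 T := fun u hu => ⟨ht.trans hu.1, hu.2⟩
  have htmem : t ∈ Icc t T := ⟨le_rfl, htT.le⟩
  have hb_exp : ∀ u ∈ Icc t T, b u = K * exp (φ u ^ 2 / 2 - r * (T - u)) := fun u hu => by
    rw [hb, div_two_mul_stdCdf_eq (heq u (hmem u hu))]
  have hφT : φ T = 0 :=
    eq_zero_of_exp_sq_mul_stdCdf_eq_half (by simpa using heq T (hmem T ⟨htT.le, le_rfl⟩))
  have hφt : 0 < φ t := pos_of_half_lt_exp_sq_mul_stdCdf <| by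
    rw [heq t (hmem t htmem)]
    linarith [one_lt_exp_iff.2 (mul_pos hr (sub_pos.2 htT))]
  have hintegrand : EqOn (fun u => exp (-r * (u - t)) *
      stdCdf ((log (b u / b t) - r * (u - t) + Sig t u / 2) / √(Sig t u)))
      (fun u => exp (-r * (u - t)) / 2) (uIcc t T) := fun u hu => by
    rw [uIcc_of_le htT.le] at hu
    simp only [hSig, hb_exp u hu, hb_exp t htmem, boundary_log_ratio_sub_add_eq_zero hK.ne',
      zero_div, stdCdf_zero]
    ring
  have hVe_bt : Ve t (b t) = K * exp (-r * (T - t)) / 2 - b t * stdCdf (-φ t) := by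
    rw [hVe, hSig, hφT, zero_pow two_ne_zero, sub_zero]
    exact put_value_at_boundary hK.ne' hφt r (T - t) (hb_exp t htmem)
  have hN : b t * stdCdf (φ t) = K / 2 := by
    rw [hb]; field_simp [(stdCdf_pos (φ t)).ne']
  rw [intervalIntegral.integral_congr hintegrand, hVe_bt, intervalIntegral.integral_div,
    integral_exp_neg_mul_sub hr.ne']
  field_simp
  linear_combination (-2) * hN + 2 * b t * stdCdf_add_stdCdf_neg (φ t)

theorem boundary_solves_integral_equation_vol (r T K : ℝ)
    (hr : 0 < r) (hT : 0 < T) (hK : 0 < K)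
    (φ : ℝ → ℝ) (hdiff : DifferentiableOn ℝ φ (Set.Icc 0 T))
    (heq : ∀ t ∈ Set.Icc 0 T,
      Real.exp ((φ t) ^ 2 / 2) * stdCdf (φ t) = Real.exp (r * (T - t)) / 2)
    -- `Sig(t,u) = φ(t)² − φ(u)²` and `b(t) = K/(2·N(φ(t)))`
    (Sig : ℝ → ℝ → ℝ) (hSig : ∀ t u, Sig t u = (φ t) ^ 2 - (φ u) ^ 2)
    (b : ℝ → ℝ) (hb : ∀ t, b t = K / (2 * stdCdf (φ t)))
    (Ve : ℝ → ℝ → ℝ)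
    (hVe : ∀ t x, Ve t x
      = K * Real.exp (-r * (T - t)) *
          stdCdf ((Real.log (K / x) - r * (T - t) + Sig t T / 2) / Real.sqrt (Sig t T))
        - x * stdCdf ((Real.log (K / x) - r * (T - t) - Sig t T / 2) / Real.sqrt (Sig t T))) :
    ∀ t, 0 ≤ t → t < T →
      K - b t
        = Ve t (b t)
          + r * K * ∫ u in t..T, Real.exp (-r * (u - t)) *
              stdCdf ((Real.log (b u / b t) - r * (u - t) + Sig t u / 2) / Real.sqrt (Sig t u)) :=
  boundary_solves_integral_equation_vol_general r T K hr hK φ heq Sig hSig b hb Ve hVe
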